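/- arXiv:math/0612166 — 2 statements merged into one kernel-verified Lean document; each statement's English description precedes it below -/
import Mathlib

section
/- The commutant of the unilateral right shift S is a maximal abelian subalgebra of L(H): (1) any two bounded linear operators T₁, T₂ on H satisfying T₁ ∘ S = S ∘ T₁ and T₂ ∘ S = S ∘ T₂ commute with each other, i.e. T₁ ∘ T₂ = T₂ ∘ T₁; and (2) any bounded linear operator T₀ on H that commutes with every operator commuting with S itself commutes with S. -/
/-!
An operator `T` commuting with the shift is determined by `φ = T e₀`: since `e_n = Sⁿ e₀`,
`T f = ∑ f n • Sⁿ φ`, i.e. `T f` is the convolution of `f` with `φ`. Convolution is commutative,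
so `T₁ T₂ e₀ = T₂ T₁ e₀`, and as `T₁ T₂` and `T₂ T₁` both commute with `S` they coincide.
Maximality is immediate because `S` lies in its own commutant.
-/

open Finset ENNReal

namespace lp

variable {𝕜 : Type*} [NormedField 𝕜] {p : ℝ≥0∞} [Fact (1 ≤ p)]
  {S : lp (fun _ : ℕ => 𝕜) p →L[𝕜] lp (fun _ : ℕ => 𝕜) p}

variable (hS0 : ∀ f, S f 0 = 0) (hS : ∀ f n, S f (n + 1) = f n)
include hS0 hS

theorem shift_pow_apply (n : ℕ) (f : lp (fun _ : ℕ => 𝕜) p) (k : ℕ) :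
    (S ^ n) f k = if n ≤ k then f (k - n) else 0 := by
  induction n generalizing k with
  | zero => simp
  | succ n ih =>
    rw [pow_succ', mul_apply_eq_comp]
    cases k with
    | zero => simp [hS0]
    | succ k => rw [hS, ih]; simp

theorem shift_pow_single_zero (n : ℕ) (c : 𝕜) :
    (S ^ n) (lp.single p 0 c) = lp.single p n c := by
  ext k
  rw [shift_pow_apply hS0 hS]
  simp only [lp.single_apply, Pi.single_apply]
  split_ifs <;> first | rfl | omega

variable {T T' : lp (fun _ : ℕ => 𝕜) p →L[𝕜] lp (fun _ : ℕ => 𝕜) p} (hp : p ≠ ⊤)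
include hp

theorem hasSum_of_commute_shift (hT : Commute T S) (f : lp (fun _ : ℕ => 𝕜) p) :
    HasSum (fun n => f n • (S ^ n) (T (lp.single p 0 1))) (T f) := by
  convert (lp.hasSum_single hp f).mapL T using 2 with n
  rw [← shift_pow_single_zero hS0 hS n, ← mul_apply_eq_comp, ← (hT.pow_right n).eq,
    mul_apply_eq_comp, ← map_smul, ← map_smul, ← lp.single_smul, smul_eq_mul, mul_one]

theorem ext_of_commute_shift (hT : Commute T S) (hT' : Commute T' S)
    (h : T (lp.single p 0 1) = T' (lp.single p 0 1)) : T = T' := by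
  ext1 f
  refine (hasSum_of_commute_shift hS0 hS hp hT f).unique ?_
  rw [h]
  exact hasSum_of_commute_shift hS0 hS hp hT' f

theorem apply_eq_sum_antidiagonal_of_commute_shift (hT : Commute T S)
    (f : lp (fun _ : ℕ => 𝕜) p) (k : ℕ) :
    T f k = ∑ ij ∈ antidiagonal k, f ij.1 * T (lp.single p 0 1) ij.2 := by
  have hk : HasSum (fun n => f n * (S ^ n) (T (lp.single p 0 1)) k) (T f k) :=
    (hasSum_of_commute_shift hS0 hS hp hT f).mapL (lp.evalCLM 𝕜 _ p k)
  rw [Nat.sum_antidiagonal_eq_sum_range_succ (fun i j => f i * T (lp.single p 0 1) j),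
    ← hk.tsum_eq, tsum_eq_sum (s := range (k + 1))]
  · refine sum_congr rfl fun n hn => ?_
    rw [shift_pow_apply hS0 hS, if_pos (Nat.lt_succ_iff.mp (mem_range.mp hn))]
  · intro n hn
    rw [shift_pow_apply hS0 hS, if_neg (by simpa [Nat.lt_succ_iff] using hn), mul_zero]

theorem commute_of_commute_shift (hT : Commute T S) (hT' : Commute T' S) : Commute T T' := by
  refine ext_of_commute_shift hS0 hS hp (hT.mul_left hT') (hT'.mul_left hT) ?_
  ext k
  rw [mul_apply_eq_comp, mul_apply_eq_comp,
    apply_eq_sum_antidiagonal_of_commute_shift hS0 hS hp hT,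
    apply_eq_sum_antidiagonal_of_commute_shift hS0 hS hp hT', ← Nat.sum_antidiagonal_swap]
  simp only [Prod.fst_swap, Prod.snd_swap, mul_comm]

end lp

/-- The commutant of the unilateral right shift `S` on `H = ℓ²(ℕ, ℂ)` is a maximal
abelian subalgebra of `L(H)`: (1) any two operators commuting with `S` commute with
each other, and (2) any operator commuting with every operator in the commutant of `S`
itself commutes with `S`. -/
theorem commutant_shift_maximal_abelian
    (S : lp (fun _ : ℕ => ℂ) 2 →L[ℂ] lp (fun _ : ℕ => ℂ) 2)
    (hS0 : ∀ f : lp (fun _ : ℕ => ℂ) 2, (S f) 0 = 0)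
    (hS : ∀ f : lp (fun _ : ℕ => ℂ) 2, ∀ n : ℕ, (S f) (n + 1) = f n) :
    (∀ T₁ T₂ : lp (fun _ : ℕ => ℂ) 2 →L[ℂ] lp (fun _ : ℕ => ℂ) 2,
      T₁.comp S = S.comp T₁ → T₂.comp S = S.comp T₂ → T₁.comp T₂ = T₂.comp T₁) ∧
    (∀ T₀ : lp (fun _ : ℕ => ℂ) 2 →L[ℂ] lp (fun _ : ℕ => ℂ) 2,
      (∀ T : lp (fun _ : ℕ => ℂ) 2 →L[ℂ] lp (fun _ : ℕ => ℂ) 2,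
        T.comp S = S.comp T → T₀.comp T = T.comp T₀) →
      T₀.comp S = S.comp T₀) :=
  ⟨fun _ _ h₁ h₂ => lp.commute_of_commute_shift hS0 hS ENNReal.ofNat_ne_top h₁ h₂,
    fun _ h => h S rfl⟩
end

section
/- Let φ : 𝔻 → 𝔻 be a function from the open unit disk to itself, and let Y be a set of functions from 𝔻 to ℂ such that: (i) Y is invariant under multiplication by φ, i.e. for every f ∈ Y the function z ↦ φ(z)·f(z) belongs to Y; and (ii) for every function f : 𝔻 → ℂ, f ∈ Y if and only if f ∘ φ ∈ Y. Then Y is invariant under the shift: for every f ∈ Y, the function z ↦ z·f(z) belongs to Y. -/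
/-- Let `φ : 𝔻 → 𝔻` be a self-map of the open unit disk and `Y` a set of functions
`𝔻 → ℂ` such that (i) `Y` is invariant under multiplication by `φ`, and (ii) for every
`f`, `f ∈ Y ↔ f ∘ φ ∈ Y`.  Then `Y` is invariant under the shift: for every `f ∈ Y`,
the function `z ↦ z · f(z)` belongs to `Y`. -/
theorem composition_invariance_implies_shift_invariance
    (φ : Metric.ball (0 : ℂ) 1 → Metric.ball (0 : ℂ) 1)
    (Y : Set (Metric.ball (0 : ℂ) 1 → ℂ))
    (h1 : ∀ f ∈ Y, (fun z : Metric.ball (0 : ℂ) 1 => (φ z : ℂ) * f z) ∈ Y)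
    (h2 : ∀ f : Metric.ball (0 : ℂ) 1 → ℂ, f ∈ Y ↔ f ∘ φ ∈ Y) :
    ∀ f ∈ Y, (fun z : Metric.ball (0 : ℂ) 1 => (z : ℂ) * f z) ∈ Y := by
  intro f hf
  rw [h2]
  have hfφ : f ∘ φ ∈ Y := (h2 f).mp hf
  exact h1 _ hfφ
end
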